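/- Every stratified propositional logic program has at most one stable model. -/

import Mathlib

/-- A propositional logic-program rule `head :- pos, not neg`.
`head = none` represents a strong constraint (rule with empty head). -/
structure LPRule where
  head : Option ℕ
  pos : Finset ℕ
  neg : Finset ℕ
deriving DecidableEq

namespace LP

/-- Truth of a rule head w.r.t. an interpretation; an empty head is never true. -/
def headTrue (I : Set ℕ) : Option ℕ → Prop
  | none => False
  | some a => a ∈ I

/-- The body of a rule is true w.r.t. `I`. -/
def bodyTrue (I : Set ℕ) (r : LPRule) : Prop :=
  (∀ b ∈ r.pos, b ∈ I) ∧ (∀ b ∈ r.neg, b ∉ I)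

/-- `I` satisfies rule `r`. -/
def satRule (I : Set ℕ) (r : LPRule) : Prop := bodyTrue I r → headTrue I r.head

/-- `I` is a model of the program `P`. -/
def isModel (P : Set LPRule) (I : Set ℕ) : Prop := ∀ r ∈ P, satRule I r

/-- A positive (negation-free) program. -/
def isPositive (P : Set LPRule) : Prop := ∀ r ∈ P, r.neg = ∅

/-- A constraint-free program (no rules with empty head). -/
def constraintFree (P : Set LPRule) : Prop := ∀ r ∈ P, r.head ≠ none

/-- The Gelfond-Lifschitz reduct `P^I`. -/
def reduct (P : Set LPRule) (I : Set ℕ) : Set LPRule :=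
  (fun r => LPRule.mk r.head r.pos ∅) '' {r ∈ P | ∀ b ∈ r.neg, b ∉ I}

/-- `M` is the least model of `P`. -/
def isLeastModel (P : Set LPRule) (M : Set ℕ) : Prop :=
  isModel P M ∧ ∀ M', isModel P M' → M ⊆ M'

/-- `M` is a stable model of `P`: it is the least model of the reduct `P^M`. -/
def isStable (P : Set LPRule) (M : Set ℕ) : Prop := isLeastModel (reduct P M) M

/-- `facts S` is the set of facts `{p :- | p ∈ S}`. -/
def facts (S : Set ℕ) : Set LPRule := (fun p => LPRule.mk (some p) ∅ ∅) '' S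

/-- The atoms occurring in a rule. -/
def ruleAtoms (r : LPRule) : Set ℕ := {a | r.head = some a} ∪ ↑r.pos ∪ ↑r.neg

/-- The Herbrand base of a program: all atoms occurring in it. -/
def atoms (P : Set LPRule) : Set ℕ := ⋃ r ∈ P, ruleAtoms r

/-- `p` depends on `q`: some rule has head `p` and `q` in its body. -/
def dependsOn (P : Set LPRule) (p q : ℕ) : Prop :=
  ∃ r ∈ P, r.head = some p ∧ (q ∈ r.pos ∨ q ∈ r.neg)

/-- `P` is stratified: no rule with head `p` and `not q` in the body where
`q` transitively depends on `p`. -/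
def stratified (P : Set LPRule) : Prop :=
  ∀ r ∈ P, ∀ p, r.head = some p → ∀ q ∈ r.neg, ¬ Relation.TransGen (dependsOn P) q p

/-- Hypotheses `H` do not occur in rule heads of `P`. -/
def hypFree (P : Set LPRule) (H : Finset ℕ) : Prop :=
  ∀ r ∈ P, ∀ h ∈ H, r.head ≠ some h

/-- `S` is an admissible solution: `S ⊆ H` and some stable model of
`P ∪ facts S` makes all observations true. -/
def admissible (P : Set LPRule) (H obsP obsN : Finset ℕ) (S : Set ℕ) : Prop :=
  S ⊆ ↑H ∧ ∃ M, isStable (P ∪ facts S) M ∧ (∀ o ∈ obsP, o ∈ M) ∧ (∀ o ∈ obsN, o ∉ M)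

/-- `sum_γ`: total penalty of the hypotheses of `H` belonging to `S`. -/
noncomputable def cost (γ : ℕ → NNReal) (H : Finset ℕ) (S : Set ℕ) : NNReal :=
  ∑ h ∈ H, S.indicator γ h

/-- `S` is an optimal solution: admissible with minimal total penalty. -/
def optimal (P : Set LPRule) (H obsP obsN : Finset ℕ) (γ : ℕ → NNReal) (S : Set ℕ) : Prop :=
  admissible P H obsP obsN S ∧
  ∀ S', admissible P H obsP obsN S' → cost γ H S ≤ cost γ H S'

end LP

/-! Stable models `M`, `N` of a finite stratified program are compared by well-founded induction
along "`p` depends on `q` through a negation", i.e. stratum by stratum. If `M` and `N` agree on all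
atoms below `p`, the atoms whose lower part agrees and that lie in `N` are closed under the rules
of the reduct `P^M` (their negative bodies are read identically in `M` and `N`), so they contain
the least model `M` of `P^M`; hence `p ∈ M → p ∈ N`, and symmetrically. -/

-- The number of predecessors strictly decreases along `r`.
theorem wellFounded_of_finite_predecessors {α : Type*} {r : α → α → Prop}
    (htrans : ∀ a b c, r a b → r b c → r a c) (hirrefl : ∀ a, ¬ r a a)
    (hfin : ∀ a, {b | r b a}.Finite) : WellFounded r := by
  refine Subrelation.wf (r := InvImage (· < ·) fun a => {b | r b a}.ncard) ?_
    (InvImage.wf _ wellFounded_lt)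
  intro a b hab
  refine Set.ncard_lt_ncard ⟨fun c hca => htrans c a b hca hab, fun hsub => ?_⟩ (hfin b)
  exact hirrefl a (hsub hab)

namespace LP

open Relation

variable {P : Set LPRule}

theorem isPositive_reduct (P : Set LPRule) (I : Set ℕ) : isPositive (reduct P I) := by
  rintro _ ⟨r, _, rfl⟩
  rfl

theorem isLeastModel.subset_of_closed {Q : Set LPRule} {M K : Set ℕ} (hQ : isPositive Q)
    (hM : isLeastModel Q M)
    (hK : ∀ r ∈ Q, ∀ x, r.head = some x → (∀ b ∈ r.pos, b ∈ M ∩ K) → x ∈ K) : M ⊆ K := by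
  -- Intersecting with `M` makes `K` satisfy the constraints of `Q` as well.
  suffices hMK : isModel Q (M ∩ K) from fun x hx => (hM.2 _ hMK hx).2
  intro r hr hbody
  have hheadM : headTrue M r.head :=
    hM.1 r hr ⟨fun b hb => (hbody.1 b hb).1, by simp [hQ r hr]⟩
  cases hx : r.head with
  | none => rw [hx] at hheadM; exact hheadM.elim
  | some x =>
    rw [hx] at hheadM
    exact ⟨hheadM, hK r hr x hx hbody.1⟩

def negDependsOn (P : Set LPRule) (p q : ℕ) : Prop :=
  ∃ r ∈ P, r.head = some p ∧ q ∈ r.neg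

/-- In a stratification, `q` lies in a strictly lower stratum than `p`. -/
def dependsThroughNeg (P : Set LPRule) (p q : ℕ) : Prop :=
  ∃ a b, ReflTransGen (dependsOn P) p a ∧ negDependsOn P a b ∧ ReflTransGen (dependsOn P) b q

theorem negDependsOn.dependsOn {p q : ℕ} (h : negDependsOn P p q) : dependsOn P p q :=
  let ⟨r, hr, hp, hq⟩ := h
  ⟨r, hr, hp, Or.inr hq⟩

theorem negDependsOn.dependsThroughNeg {p q : ℕ} (h : negDependsOn P p q) :
    dependsThroughNeg P p q :=
  ⟨p, q, .refl, h, .refl⟩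

theorem dependsThroughNeg.reflTransGen {p q : ℕ} (h : dependsThroughNeg P p q) :
    ReflTransGen (dependsOn P) p q :=
  let ⟨_, _, hpa, hab, hbq⟩ := h
  (hpa.tail hab.dependsOn).trans hbq

theorem dependsThroughNeg.head {x p q : ℕ} (hxp : ReflTransGen (dependsOn P) x p)
    (h : dependsThroughNeg P p q) : dependsThroughNeg P x q :=
  let ⟨a, b, hpa, hab, hbq⟩ := h
  ⟨a, b, hxp.trans hpa, hab, hbq⟩

theorem dependsThroughNeg.trans {p q s : ℕ} (hpq : dependsThroughNeg P p q)
    (hqs : dependsThroughNeg P q s) : dependsThroughNeg P p s :=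
  hqs.head hpq.reflTransGen

theorem stratified.not_dependsThroughNeg_self (hP : stratified P) (p : ℕ) :
    ¬ dependsThroughNeg P p p := by
  rintro ⟨a, b, hpa, ⟨r, hr, ha, hb⟩, hbp⟩
  refine hP r hr a ha b hb ?_
  rcases reflTransGen_iff_eq_or_transGen.mp (hbp.trans hpa) with rfl | hba
  · exact .single ⟨r, hr, ha, Or.inr hb⟩
  · exact hba

theorem finite_setOf_dependsThroughNeg (hP : P.Finite) (p : ℕ) :
    {q | dependsThroughNeg P p q}.Finite := by
  refine (hP.biUnion fun r _ => (r.pos ∪ r.neg).finite_toSet).subset ?_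
  rintro q ⟨a, b, -, ⟨r, hr, -, hb⟩, hbq⟩
  rcases hbq.cases_tail with rfl | ⟨c, -, r', hr', -, hq⟩
  · exact Set.mem_biUnion hr (by simp [hb])
  · exact Set.mem_biUnion hr' (by simpa using hq)

theorem wellFounded_dependsThroughNeg (hfin : P.Finite) (hP : stratified P) :
    WellFounded (flip (dependsThroughNeg P)) :=
  wellFounded_of_finite_predecessors (fun _ _ _ hab hbc => hbc.trans hab)
    hP.not_dependsThroughNeg_self (finite_setOf_dependsThroughNeg hfin)

theorem isStable.mem_of_agree {M N : Set ℕ} (hM : isStable P M) (hN : isStable P N) {p : ℕ}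
    (hagree : ∀ q, dependsThroughNeg P p q → (q ∈ M ↔ q ∈ N)) : p ∈ M → p ∈ N := by
  let K : Set ℕ := {x | (∀ q, dependsThroughNeg P x q → (q ∈ M ↔ q ∈ N)) → x ∈ N}
  suffices hMK : M ⊆ K from fun hp => hMK hp hagree
  refine isLeastModel.subset_of_closed (isPositive_reduct P M) hM ?_
  rintro _ ⟨r, ⟨hr, hnegM⟩, rfl⟩ x hx hpos hxagree
  have hnegN : ∀ b ∈ r.neg, b ∉ N := fun b hb hbN =>
    hnegM b hb ((hxagree b (negDependsOn.dependsThroughNeg ⟨r, hr, hx, hb⟩)).mpr hbN)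
  have hposN : ∀ b ∈ r.pos, b ∈ N := fun b hb =>
    (hpos b hb).2 fun q hq => hxagree q (hq.head (.single ⟨r, hr, hx, Or.inl hb⟩))
  have hhead : headTrue N r.head :=
    hN.1 ⟨r.head, r.pos, ∅⟩ ⟨r, ⟨hr, hnegN⟩, rfl⟩ ⟨hposN, by simp⟩
  rwa [hx] at hhead

end LP

/-- a stratified program has at most one stable model. -/
theorem stratified_at_most_one_stable (P : Set LPRule) (hFin : P.Finite)
    (hStrat : LP.stratified P) :
    ∀ M N, LP.isStable P M → LP.isStable P N → M = N := by
  intro M N hM hN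
  ext p
  induction p using (LP.wellFounded_dependsThroughNeg hFin hStrat).induction with
  | _ p ih =>
    exact ⟨hM.mem_of_agree hN ih, hN.mem_of_agree hM fun q hq => (ih q hq).symm⟩
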